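/- For every n : ℕ and all a, b in the level-(n+1) set Set.range (E^[n+1]), level-n multiplication coincides with level-(n+1) addition: Fmul n a b = Fadd (n+1) a b. (This is the paper's Proposition that a [n:2] b = a [n+1:1] b for a, b in the (n+1)-st level set.) -/

import Mathlib

/-- The exponential function `E a = w ^ a` on ℕ, for a fixed base `w`. -/
def E (w : ℕ) (a : ℕ) : ℕ := w ^ a

/-- Bennett's commutative hyperoperation `F_n` (level-`n` addition):
`Fadd w n a b = E^[n] (L^[n] a + L^[n] b)` where `L = Nat.log w`. -/
def Fadd (w : ℕ) (n : ℕ) (a b : ℕ) : ℕ :=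
  (E w)^[n] ((Nat.log w)^[n] a + (Nat.log w)^[n] b)

/-- Bennett's commutative hyperoperation `F_{n+1}` (level-`n` multiplication):
`Fmul w n a b = E^[n] (L^[n] a * L^[n] b)` where `L = Nat.log w`. -/
def Fmul (w : ℕ) (n : ℕ) (a b : ℕ) : ℕ :=
  (E w)^[n] ((Nat.log w)^[n] a * (Nat.log w)^[n] b)

/-! On the level-`(n+1)` set, `L^[n]` peels `a = E^[n+1] x` down to `E x = w ^ x`, so
level-`n` multiplication computes `E^[n] (w ^ x * w ^ y) = E^[n] (w ^ (x + y))`,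
which is level-`(n+1)` addition `E^[n+1] (x + y)`. -/

theorem E_add (w a b : ℕ) : E w (a + b) = E w a * E w b :=
  pow_add w a b

theorem leftInverse_log_E {w : ℕ} (hw : 1 < w) : Function.LeftInverse (Nat.log w) (E w) :=
  Nat.log_pow hw

/-- For `a`, `b` in the level-`(n+1)` set, level-`n` multiplication coincides with
level-`(n+1)` addition. -/
theorem Fmul_eq_Fadd_succ (w : ℕ) (hw : 2 ≤ w) (n : ℕ) :
    ∀ a ∈ Set.range ((E w)^[n+1]), ∀ b ∈ Set.range ((E w)^[n+1]),
      Fmul w n a b = Fadd w (n+1) a b := by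
  have hL := (leftInverse_log_E hw).iterate
  rintro _ ⟨x, rfl⟩ _ ⟨y, rfl⟩
  have hpeel (z : ℕ) : (Nat.log w)^[n] ((E w)^[n+1] z) = E w z := by
    rw [Function.iterate_succ_apply, hL]
  rw [Fmul, Fadd, hpeel, hpeel, hL, hL, Function.iterate_succ_apply, E_add]
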